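/- Let a ∈ (0,1) and r ∈ (0,1). Then ∫₀¹ (a + tr)/((1 − tr)(1 + atr)) dt = (1/r)·log(1/(1−r)) − ((1−a)/(ar))·log(1+ar), and ∫₀¹ (1−a²)/((1 − tr)(1 + atr)²) dt = ((1−a)/(1+a))·(−(1/r)log(1−r) + (1/r)log(1+ar) + a(1+a)/(1+ar)). In particular, for f_a(z) = (a+z)/(1+az), the Cesàro transforms satisfy Cf_a(r) = (1/r)log(1/(1−r)) − ((1−a)/(ar))log(1+ar) and Cf_a′(r) = ((1−a)/(1+a))·(−(1/r)log(1−r) + (1/r)log(1+ar) + a(1+a)/(1+ar)). -/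

import Mathlib

open Set

/-- The Cesàro operator: `Cf(z) = ∫₀¹ f(tz)/(1 - tz) dt`. -/
noncomputable def cesaro (f : ℂ → ℂ) (z : ℂ) : ℂ :=
  ∫ t in (0:ℝ)..1, f ((t : ℂ) * z) / (1 - (t : ℂ) * z)

lemma int1 (a r : ℝ) (ha : a ∈ Ioo (0:ℝ) 1) (hr : r ∈ Ioo (0:ℝ) 1) :
    (∫ t in (0:ℝ)..1, (a + t * r) / ((1 - t * r) * (1 + a * t * r)))
      = -(1 / r) * Real.log (1 - r) - ((1 - a) / (a * r)) * Real.log (1 + a * r) := by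
  obtain ⟨ha0, ha1⟩ := ha
  obtain ⟨hr0, hr1⟩ := hr
  have key : ∀ t ∈ uIcc (0:ℝ) 1, 0 < 1 - t * r ∧ 0 < 1 + a * t * r := by
    intro t ht
    rw [uIcc_of_le zero_le_one] at ht
    constructor
    · nlinarith [ht.1, ht.2]
    · nlinarith [ht.1, ht.2, mul_nonneg (mul_nonneg ha0.le ht.1) hr0.le]
  have hFTC := intervalIntegral.integral_eq_sub_of_hasDerivAt
    (f := fun t => -(1/r) * Real.log (1 - t*r) + ((a-1)/(a*r)) * Real.log (1 + a*t*r))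
    (f' := fun t => (a + t * r) / ((1 - t * r) * (1 + a * t * r)))
    (a := 0) (b := 1) ?_ ?_
  · rw [hFTC]
    simp only [zero_mul, mul_zero, sub_zero, add_zero, Real.log_one]
    ring
  · intro t ht
    obtain ⟨h1, h2⟩ := key t ht
    have hd1 : HasDerivAt (fun t : ℝ => 1 - t * r) (-r) t := by
      simpa using ((hasDerivAt_id t).mul_const r).const_sub 1
    have hd2 : HasDerivAt (fun t : ℝ => 1 + a * t * r) (a * r) t := by
      have := (((hasDerivAt_id t).const_mul a).mul_const r).const_add 1
      simpa using this
    have hl1 : HasDerivAt (fun t : ℝ => Real.log (1 - t*r)) ((1 - t*r)⁻¹ * (-r)) t :=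
      by have := (Real.hasDerivAt_log h1.ne').comp t hd1; exact this
    have hl2 : HasDerivAt (fun t : ℝ => Real.log (1 + a*t*r)) ((1 + a*t*r)⁻¹ * (a*r)) t :=
      by have := (Real.hasDerivAt_log h2.ne').comp t hd2; exact this
    have := (hl1.const_mul (-(1/r))).add (hl2.const_mul ((a-1)/(a*r)))
    refine this.congr_deriv ?_
    field_simp [(by linarith : (0:ℝ) < 1 - r * t).ne', (by linarith : (0:ℝ) < 1 + r * t * a).ne']
    ring
  · apply ContinuousOn.intervalIntegrable
    apply ContinuousOn.div
    · fun_prop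
    · fun_prop
    · intro t ht
      obtain ⟨h1, h2⟩ := key t ht
      positivity

lemma int2 (a r : ℝ) (ha : a ∈ Ioo (0:ℝ) 1) (hr : r ∈ Ioo (0:ℝ) 1) :
    (∫ t in (0:ℝ)..1, (1 - a ^ 2) / ((1 - t * r) * (1 + a * t * r) ^ 2))
      = ((1 - a) / (1 + a)) * (-(1/r) * Real.log (1 - r) + (1/r) * Real.log (1 + a * r)
          + a * (1 + a) / (1 + a * r)) := by
  obtain ⟨ha0, ha1⟩ := ha
  obtain ⟨hr0, hr1⟩ := hr
  have key : ∀ t ∈ uIcc (0:ℝ) 1, 0 < 1 - t * r ∧ 0 < 1 + a * t * r := by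
    intro t ht
    rw [uIcc_of_le zero_le_one] at ht
    constructor
    · nlinarith [ht.1, ht.2]
    · nlinarith [ht.1, ht.2, mul_nonneg (mul_nonneg ha0.le ht.1) hr0.le]
  have hA : (0:ℝ) < 1 + a := by linarith
  have hFTC := intervalIntegral.integral_eq_sub_of_hasDerivAt
    (f := fun t => -((1-a)/((1+a)*r)) * Real.log (1 - t*r)
      + ((1-a)/((1+a)*r)) * Real.log (1 + a*t*r) - (1-a)/r * (1/(1 + a*t*r)))
    (f' := fun t => (1 - a ^ 2) / ((1 - t * r) * (1 + a * t * r) ^ 2))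
    (a := 0) (b := 1) ?_ ?_
  · rw [hFTC]
    have h2 : (0:ℝ) < 1 + a * r := by nlinarith
    simp only [zero_mul, mul_zero, sub_zero, add_zero, Real.log_one]
    field_simp
    ring
  · intro t ht
    obtain ⟨h1, h2⟩ := key t ht
    have hd1 : HasDerivAt (fun t : ℝ => 1 - t * r) (-r) t := by
      simpa using ((hasDerivAt_id t).mul_const r).const_sub 1
    have hd2 : HasDerivAt (fun t : ℝ => 1 + a * t * r) (a * r) t := by
      have := (((hasDerivAt_id t).const_mul a).mul_const r).const_add 1
      simpa using this
    have hl1 : HasDerivAt (fun t : ℝ => Real.log (1 - t*r)) ((1 - t*r)⁻¹ * (-r)) t :=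
      by have := (Real.hasDerivAt_log h1.ne').comp t hd1; exact this
    have hl2 : HasDerivAt (fun t : ℝ => Real.log (1 + a*t*r)) ((1 + a*t*r)⁻¹ * (a*r)) t :=
      by have := (Real.hasDerivAt_log h2.ne').comp t hd2; exact this
    have hinv : HasDerivAt (fun t : ℝ => (1-a)/r * (1/(1 + a*t*r)))
        ((1-a)/r * ((0 * (1 + a*t*r) - 1 * (a*r)) / (1 + a*t*r)^2)) t :=
      ((hasDerivAt_const t (1:ℝ)).div hd2 h2.ne').const_mul ((1-a)/r)
    have := ((hl1.const_mul (-((1-a)/((1+a)*r)))).add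
      (hl2.const_mul ((1-a)/((1+a)*r)))).sub hinv
    refine this.congr_deriv ?_
    field_simp [(by linarith : (0:ℝ) < 1 - r * t).ne', (by linarith : (0:ℝ) < 1 + r * t * a).ne', (by linarith : (0:ℝ) < 1 + a * r * t).ne']
    ring
  · apply ContinuousOn.intervalIntegrable
    apply ContinuousOn.div
    · fun_prop
    · fun_prop
    · intro t ht
      obtain ⟨h1, h2⟩ := key t ht
      positivity

lemma ces1 (a r : ℝ) :
    cesaro (fun z => ((a:ℂ) + z) / (1 + (a:ℂ) * z)) (r:ℂ)
      = (((∫ t in (0:ℝ)..1, (a + t * r) / ((1 - t * r) * (1 + a * t * r)) : ℝ)) : ℂ) := by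
  rw [cesaro, ← intervalIntegral.integral_ofReal]
  apply intervalIntegral.integral_congr
  intro t _
  dsimp only
  push_cast
  rw [div_div]
  ring

lemma hasDeriv_fa (a : ℝ) (z : ℂ) (hz : 1 + (a:ℂ) * z ≠ 0) :
    HasDerivAt (fun z => ((a:ℂ) + z) / (1 + (a:ℂ) * z))
      ((1 - (a:ℂ)^2) / (1 + (a:ℂ) * z)^2) z := by
  have h1 : HasDerivAt (fun z : ℂ => (a:ℂ) + z) 1 z := (hasDerivAt_id z).const_add _
  have h2 : HasDerivAt (fun z : ℂ => 1 + (a:ℂ) * z) (a:ℂ) z := by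
    simpa using ((hasDerivAt_id z).const_mul (a:ℂ)).const_add 1
  have := h1.div h2 hz
  refine this.congr_deriv ?_
  ring

lemma ces2 (a r : ℝ) (ha : a ∈ Ioo (0:ℝ) 1) (hr : r ∈ Ioo (0:ℝ) 1) :
    cesaro (deriv (fun z => ((a:ℂ) + z) / (1 + (a:ℂ) * z))) (r:ℂ)
      = (((∫ t in (0:ℝ)..1, (1 - a ^ 2) / ((1 - t * r) * (1 + a * t * r) ^ 2) : ℝ)) : ℂ) := by
  rw [cesaro, ← intervalIntegral.integral_ofReal]
  apply intervalIntegral.integral_congr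
  intro t ht
  rw [uIcc_of_le zero_le_one] at ht
  have hz : 1 + (a:ℂ) * ((t:ℂ) * (r:ℂ)) ≠ 0 := by
    have h0 : 0 ≤ a * (t * r) := mul_nonneg ha.1.le (mul_nonneg ht.1 hr.1.le)
    have : (1:ℝ) + a * (t * r) > 0 := by linarith
    have h := this.ne'
    intro hc
    apply h
    have : ((1 + a * (t*r) : ℝ) : ℂ) = 0 := by push_cast; linear_combination hc
    exact_mod_cast this
  dsimp only
  rw [(hasDeriv_fa a _ hz).deriv]
  push_cast
  rw [div_div]
  ring

theorem stmt17 (a r : ℝ) (ha : a ∈ Ioo (0:ℝ) 1) (hr : r ∈ Ioo (0:ℝ) 1) :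
    (∫ t in (0:ℝ)..1, (a + t * r) / ((1 - t * r) * (1 + a * t * r)))
      = (1 / r) * Real.log (1 / (1 - r)) - ((1 - a) / (a * r)) * Real.log (1 + a * r) ∧
    (∫ t in (0:ℝ)..1, (1 - a ^ 2) / ((1 - t * r) * (1 + a * t * r) ^ 2))
      = ((1 - a) / (1 + a)) * (-(1/r) * Real.log (1 - r) + (1/r) * Real.log (1 + a * r)
          + a * (1 + a) / (1 + a * r)) ∧
    cesaro (fun z => ((a:ℂ) + z) / (1 + (a:ℂ) * z)) (r:ℂ)
      = (((1 / r) * Real.log (1 / (1 - r))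
          - ((1 - a) / (a * r)) * Real.log (1 + a * r) : ℝ) : ℂ) ∧
    cesaro (deriv (fun z => ((a:ℂ) + z) / (1 + (a:ℂ) * z))) (r:ℂ)
      = ((((1 - a) / (1 + a)) * (-(1/r) * Real.log (1 - r) + (1/r) * Real.log (1 + a * r)
          + a * (1 + a) / (1 + a * r)) : ℝ) : ℂ) := by
  have e1 : (1 / r) * Real.log (1 / (1 - r)) - ((1 - a) / (a * r)) * Real.log (1 + a * r)
      = -(1 / r) * Real.log (1 - r) - ((1 - a) / (a * r)) * Real.log (1 + a * r) := by
    rw [one_div (1 - r), Real.log_inv]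
    ring
  refine ⟨by rw [int1 a r ha hr, e1], int2 a r ha hr, ?_, ?_⟩
  · rw [ces1 a r, int1 a r ha hr, e1]
  · rw [ces2 a r ha hr, int2 a r ha hr]
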